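/- Let F(z) = 1 − (2/Γ(Q)) (z/ζ)^{Q/2} K_Q(2√(z/ζ)) for ζ > 0 and integer Q ≥ 2. Then as ζ → ∞ (high SNR), F(z) ~ z/((Q−1)ζ); i.e., lim_{ζ→∞} ζ·F(z) = z/(Q−1) for each fixed z > 0. -/

import Mathlib

/-!
Substituting `u = √y eᵗ` in the integral defining `K_ν` gives
`y^{ν/2} K_ν(2√y) = ½ ∫₀^∞ e^{-u-y/u} u^{ν-1} du`, which is `½ Γ(ν)` at `y = 0`. So
`1 - (2/Γ(ν)) y^{ν/2} K_ν(2√y) = Γ(ν)⁻¹ ∫₀^∞ e^{-u} u^{ν-1} (1 - e^{-y/u}) du`, and since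
`0 ≤ (1 - e^{-y/u})/y ≤ 1/u` with limit `1/u` as `y → 0⁺`, dominated convergence shows that this
quantity divided by `y` tends to `Γ(ν-1)/Γ(ν) = 1/(ν-1)`. Finally put `y = z/ζ`.
-/

open Real Filter

/-- Modified Bessel function of the second kind, via its integral representation. -/
noncomputable def besselK (ν x : ℝ) : ℝ :=
  ∫ t in Set.Ioi (0:ℝ), Real.exp (-x * Real.cosh t) * Real.cosh (ν * t)

open MeasureTheory Set Topology

lemma integral_Ioi_mul_cosh_eq_half_integral {f : ℝ → ℝ} (hf : ∀ t, f (-t) = f t) {ν : ℝ}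
    (hi : Integrable fun t ↦ f t * exp (ν * t)) :
    ∫ t in Ioi 0, f t * cosh (ν * t) = (∫ t, f t * exp (ν * t)) / 2 := by
  have hneg : Integrable fun t ↦ f t * exp (-(ν * t)) := by
    simpa only [hf, mul_neg] using hi.comp_neg
  have hIic : ∫ t in Iic 0, f t * exp (ν * t) = ∫ t in Ioi 0, f t * exp (-(ν * t)) := by
    simpa only [hf, mul_neg, neg_zero] using
      (integral_comp_neg_Ioi 0 fun t ↦ f t * exp (ν * t)).symm
  rw [← intervalIntegral.integral_Iic_add_Ioi hi.integrableOn hi.integrableOn (b := 0), hIic,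
    ← integral_add hneg.integrableOn hi.integrableOn, ← integral_div]
  refine setIntegral_congr_fun measurableSet_Ioi fun t _ ↦ ?_
  rw [cosh_eq]
  ring

lemma range_const_mul_exp {c : ℝ} (hc : 0 < c) : range (fun t ↦ c * exp t) = Ioi 0 := by
  ext u
  refine ⟨?_, fun hu ↦ ⟨log (u / c), ?_⟩⟩
  · rintro ⟨t, rfl⟩
    exact mul_pos hc (exp_pos t)
  · change c * exp (log (u / c)) = u
    rw [exp_log (div_pos hu hc), mul_div_cancel₀ _ hc.ne']

lemma integral_comp_const_mul_exp {c : ℝ} (hc : 0 < c) (g : ℝ → ℝ) :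
    ∫ t, c * exp t * g (c * exp t) = ∫ u in Ioi 0, g u := by
  have h := integral_image_eq_integral_abs_deriv_smul MeasurableSet.univ
    (fun t _ ↦ ((hasDerivAt_exp t).const_mul c).hasDerivWithinAt)
    (fun s _ t _ hst ↦ exp_injective (mul_left_cancel₀ hc.ne' hst)) g
  rw [image_univ, range_const_mul_exp hc, Measure.restrict_univ] at h
  rw [h]
  congr 1 with t
  rw [abs_of_pos (mul_pos hc (exp_pos t)), smul_eq_mul]

lemma integrable_comp_const_mul_exp_iff {c : ℝ} (hc : 0 < c) (g : ℝ → ℝ) :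
    (Integrable fun t ↦ c * exp t * g (c * exp t)) ↔ IntegrableOn g (Ioi 0) := by
  have h := integrableOn_image_iff_integrableOn_abs_deriv_smul MeasurableSet.univ
    (fun t _ ↦ ((hasDerivAt_exp t).const_mul c).hasDerivWithinAt)
    (fun s _ t _ hst ↦ exp_injective (mul_left_cancel₀ hc.ne' hst)) g
  rw [image_univ, range_const_mul_exp hc, integrableOn_univ] at h
  rw [h]
  refine integrable_congr (Eventually.of_forall fun t ↦ ?_)
  simp only [abs_of_pos (mul_pos hc (exp_pos t)), smul_eq_mul]

lemma integrableOn_exp_neg_sub_div_mul_rpow {s y : ℝ} (hs : 0 < s) (hy : 0 ≤ y) :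
    IntegrableOn (fun u ↦ exp (-u - y / u) * u ^ (s - 1)) (Ioi 0) := by
  refine (GammaIntegral_convergent hs).mono' (by fun_prop) ?_
  filter_upwards [ae_restrict_mem measurableSet_Ioi] with u (hu : 0 < u)
  have hpow : 0 ≤ u ^ (s - 1) := rpow_nonneg hu.le _
  rw [norm_mul, norm_of_nonneg (exp_pos _).le, norm_of_nonneg hpow]
  gcongr
  linarith [div_nonneg hy hu.le]

theorem rpow_mul_besselK_eq_integral {ν y : ℝ} (hν : 0 < ν) (hy : 0 < y) :
    y ^ (ν / 2) * besselK ν (2 * √y) = (∫ u in Ioi 0, exp (-u - y / u) * u ^ (ν - 1)) / 2 := by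
  set c := √y
  have hc : 0 < c := sqrt_pos.mpr hy
  set g : ℝ → ℝ := fun u ↦ exp (-u - y / u) * u ^ (ν - 1)
  have hsubst : ∀ t, c * exp t * g (c * exp t) =
      c ^ ν * (exp (-(2 * c) * cosh t) * exp (ν * t)) := by
    intro t
    have hu : 0 < c * exp t := mul_pos hc (exp_pos t)
    have harg : -(c * exp t) - y / (c * exp t) = -(2 * c) * cosh t := by
      rw [← sq_sqrt hy.le, cosh_eq, exp_neg]
      field_simp
      ring
    simp only [g, harg, rpow_sub_one hu.ne', mul_rpow hc.le (exp_pos t).le, ← exp_mul]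
    field_simp
  have hint : Integrable fun t ↦ exp (-(2 * c) * cosh t) * exp (ν * t) := by
    have h := (integrable_comp_const_mul_exp_iff hc g).mpr
      (integrableOn_exp_neg_sub_div_mul_rpow hν hy.le)
    simp only [hsubst] at h
    exact (integrable_const_mul_iff (rpow_pos_of_pos hc ν).ne'.isUnit _).mp h
  have hcν : c ^ ν = y ^ (ν / 2) := by
    rw [show c = y ^ (1 / 2 : ℝ) from sqrt_eq_rpow y, ← rpow_mul hy.le, one_div_mul_eq_div]
  rw [besselK, integral_Ioi_mul_cosh_eq_half_integral (f := fun t ↦ exp (-(2 * c) * cosh t))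
    (fun t ↦ by rw [cosh_neg]) hint, ← integral_comp_const_mul_exp hc g]
  simp only [hsubst, integral_const_mul, hcν]
  ring

lemma tendsto_one_sub_exp_neg_div : Tendsto (fun s ↦ (1 - exp (-s)) / s) (𝓝[>] 0) (𝓝 1) := by
  have h := hasDerivAt_iff_tendsto_slope.mp (hasDerivAt_exp 0)
  rw [exp_zero] at h
  have hneg : Tendsto (fun s : ℝ ↦ -s) (𝓝[>] 0) (𝓝[≠] 0) :=
    tendsto_nhdsWithin_iff.mpr ⟨(continuous_neg.tendsto' 0 0 neg_zero).mono_left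
      nhdsWithin_le_nhds, eventually_mem_nhdsWithin.mono fun s hs ↦ neg_ne_zero.mpr hs.ne'⟩
  refine (h.comp hneg).congr fun s ↦ ?_
  simp only [Function.comp, slope_def_field, exp_zero]
  ring

lemma one_sub_exp_neg_div_mem_Icc {s : ℝ} (hs : 0 < s) : (1 - exp (-s)) / s ∈ Icc 0 1 := by
  rw [mem_Icc, div_le_one hs]
  exact ⟨div_nonneg (by linarith [exp_le_one_iff.mpr (neg_nonpos.mpr hs.le)]) hs.le,
    by linarith [add_one_le_exp (-s)]⟩

theorem tendsto_integral_mul_one_sub_exp_neg_div {h : ℝ → ℝ} (hh : IntegrableOn h (Ioi 0)) :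
    Tendsto (fun y ↦ ∫ u in Ioi 0, h u * ((1 - exp (-(y / u))) / (y / u))) (𝓝[>] 0)
      (𝓝 (∫ u in Ioi 0, h u)) := by
  refine tendsto_integral_filter_of_dominated_convergence (fun u ↦ ‖h u‖)
    (Eventually.of_forall fun y ↦ hh.aestronglyMeasurable.mul
      (Measurable.aestronglyMeasurable (by fun_prop))) ?_ hh.norm ?_
  · filter_upwards [self_mem_nhdsWithin] with y (hy : 0 < y)
    filter_upwards [ae_restrict_mem measurableSet_Ioi] with u (hu : 0 < u)
    have hk := one_sub_exp_neg_div_mem_Icc (div_pos hy hu)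
    rw [norm_mul, norm_of_nonneg hk.1]
    exact mul_le_of_le_one_right (norm_nonneg _) hk.2
  · filter_upwards [ae_restrict_mem measurableSet_Ioi] with u (hu : 0 < u)
    have hy : Tendsto (fun y ↦ y / u) (𝓝[>] 0) (𝓝[>] 0) :=
      tendsto_nhdsWithin_iff.mpr ⟨((continuous_id.div_const u).tendsto' 0 0 (zero_div u)).mono_left
        nhdsWithin_le_nhds, eventually_mem_nhdsWithin.mono fun y hy ↦ div_pos hy hu⟩
    simpa using (tendsto_one_sub_exp_neg_div.comp hy).const_mul (h u)

theorem tendsto_Gamma_sub_integral_div {s : ℝ} (hs : 1 < s) :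
    Tendsto (fun y ↦ (Gamma s - ∫ u in Ioi 0, exp (-u - y / u) * u ^ (s - 1)) / y) (𝓝[>] 0)
      (𝓝 (Gamma (s - 1))) := by
  have hs0 : 0 < s - 1 := sub_pos.mpr hs
  have h := tendsto_integral_mul_one_sub_exp_neg_div (GammaIntegral_convergent hs0)
  rw [← Gamma_eq_integral hs0] at h
  refine h.congr' ?_
  filter_upwards [self_mem_nhdsWithin] with y (hy : 0 < y)
  rw [Gamma_eq_integral (by linarith), ← integral_sub (GammaIntegral_convergent (by linarith))
    (integrableOn_exp_neg_sub_div_mul_rpow (by linarith) hy.le), ← integral_div]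
  refine setIntegral_congr_fun measurableSet_Ioi fun u (hu : 0 < u) ↦ ?_
  rw [rpow_sub_one hu.ne' (s - 1), sub_eq_add_neg (-u), exp_add]
  field_simp

theorem tendsto_one_sub_rpow_mul_besselK_eq_integral_div {ν : ℝ} (hν : 1 < ν) :
    Tendsto (fun y ↦ (1 - 2 / Gamma ν * y ^ (ν / 2) * besselK ν (2 * √y)) / y) (𝓝[>] 0)
      (𝓝 (1 / (ν - 1))) := by
  have hΓ : Gamma (ν - 1) / Gamma ν = 1 / (ν - 1) := by
    have h := Gamma_add_one (sub_pos.mpr hν).ne'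
    rw [sub_add_cancel] at h
    rw [h]
    field_simp [(Gamma_pos_of_pos (sub_pos.mpr hν)).ne']
  have h := (tendsto_Gamma_sub_integral_div hν).div_const (Gamma ν)
  rw [hΓ] at h
  refine h.congr' ?_
  filter_upwards [self_mem_nhdsWithin] with y (hy : 0 < y)
  rw [mul_assoc, rpow_mul_besselK_eq_integral (by linarith) hy]
  have := (Gamma_pos_of_pos (by linarith : 0 < ν)).ne'
  field_simp

/-- for `F(z) = 1 − (2/Γ(Q)) (z/ζ)^{Q/2} K_Q(2√(z/ζ))` with `Q ≥ 2`,
`lim_{ζ→∞} ζ·F(z) = z/(Q−1)` for each fixed `z > 0` (high-SNR single-channel scaling). -/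
theorem high_snr_outage_scaling (Q : ℕ) (hQ : 2 ≤ Q) (z : ℝ) (hz : 0 < z) :
    Tendsto
      (fun ζ : ℝ =>
        ζ * (1 - 2 / Real.Gamma Q * (z / ζ) ^ ((Q : ℝ) / 2) *
          besselK Q (2 * Real.sqrt (z / ζ))))
      atTop (nhds (z / ((Q : ℝ) - 1))) := by
  have hy : Tendsto (fun ζ ↦ z / ζ) atTop (𝓝[>] 0) :=
    tendsto_nhdsWithin_iff.mpr ⟨tendsto_const_nhds.div_atTop tendsto_id,
      (eventually_gt_atTop 0).mono fun ζ hζ ↦ div_pos hz hζ⟩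
  have h := ((tendsto_one_sub_rpow_mul_besselK_eq_integral_div (by exact_mod_cast hQ : (1 : ℝ) < Q)).comp
    hy).const_mul z
  rw [mul_one_div] at h
  refine h.congr' ?_
  filter_upwards [eventually_gt_atTop 0] with ζ hζ
  simp only [Function.comp]
  field_simp
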